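/- arXiv:2010.14830 — 3 statements merged into one kernel-verified Lean document; each statement's English description precedes it below -/
import Mathlib

section
/- Let A be a C*-algebra and let a_1, …, a_n be finitely many elements of A such that a_i a_j* = 0 whenever i ≠ j. Then ‖∑_{i=1}^n a_i* a_i‖ ≤ max_{1 ≤ i ≤ n} ‖a_i‖². -/
/-!
The elements `bᵢ = aᵢ⋆ aᵢ` are self-adjoint and pairwise orthogonal, since
`bᵢ bⱼ = aᵢ⋆ (aᵢ aⱼ⋆) aⱼ = 0`. Squaring `x = ∑ bᵢ` therefore squares each summand separately,
and for self-adjoint elements squaring squares the norm, so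
`‖x‖ ^ 2 ^ k = ‖∑ bᵢ ^ 2 ^ k‖ ≤ n · (maxᵢ ‖bᵢ‖) ^ 2 ^ k` for every `k`.
Taking `2 ^ k`-th roots and letting `k → ∞` gives `‖x‖ ≤ maxᵢ ‖bᵢ‖ = maxᵢ ‖aᵢ‖²`.
Powers are written as iterated squaring so that no unit is needed.
-/

open Filter Topology

lemma le_of_forall_pow_le_mul_pow {t M C : ℝ} (ht : 0 ≤ t) (hM : 0 ≤ M) {n : ℕ → ℕ}
    (hn : Tendsto n atTop atTop) (h : ∀ k, t ^ n k ≤ C * M ^ n k) : t ≤ M := by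
  by_contra! hMt
  have htpos : 0 < t := hM.trans_lt hMt
  have hsmall : Tendsto (fun k => C * (M / t) ^ n k) atTop (𝓝 0) := by
    simpa using ((tendsto_pow_atTop_nhds_zero_of_lt_one (div_nonneg hM ht)
      ((div_lt_one htpos).mpr hMt)).comp hn).const_mul C
  obtain ⟨k, hk⟩ := (hsmall.eventually (gt_mem_nhds one_pos)).exists
  have hle : t ^ n k ≤ t ^ n k * (C * (M / t) ^ n k) := by
    calc t ^ n k ≤ C * M ^ n k := h k
      _ = t ^ n k * (C * (M / t) ^ n k) := by rw [div_pow]; field_simp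
  exact hle.not_gt (mul_lt_of_lt_one_right (pow_pos htpos _) hk)

section NonUnitalRing

variable {R : Type*} [NonUnitalRing R] {ι : Type*}

lemma mul_self_mul_mul_self_eq_zero {p q : R} (h : p * q = 0) : p * p * (q * q) = 0 := by
  rw [mul_assoc, ← mul_assoc p q, h, zero_mul, mul_zero]

lemma sum_mul_sum_self_of_pairwise_mul_eq_zero (s : Finset ι) (p : ι → R)
    (h : (s : Set ι).Pairwise fun i j => p i * p j = 0) :
    (∑ i ∈ s, p i) * (∑ i ∈ s, p i) = ∑ i ∈ s, p i * p i := by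
  rw [Finset.sum_mul_sum]
  refine Finset.sum_congr rfl fun i hi => Finset.sum_eq_single i
    (fun j hj hji => h hi hj (Ne.symm hji)) (fun hi' => absurd hi hi')

lemma iterate_mul_self_sum_of_pairwise_mul_eq_zero (s : Finset ι) (k : ℕ) (p : ι → R)
    (h : (s : Set ι).Pairwise fun i j => p i * p j = 0) :
    (fun x : R => x * x)^[k] (∑ i ∈ s, p i) = ∑ i ∈ s, (fun x : R => x * x)^[k] (p i) := by
  induction k generalizing p with
  | zero => rfl
  | succ k ih =>
    simp only [Function.iterate_succ_apply]
    rw [sum_mul_sum_self_of_pairwise_mul_eq_zero s p h]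
    exact ih (fun i => p i * p i) fun i hi j hj hij => mul_self_mul_mul_self_eq_zero (h hi hj hij)

end NonUnitalRing

section CStarRing

variable {E : Type*} [NonUnitalNormedRing E] [StarRing E] [CStarRing E]

lemma IsSelfAdjoint.norm_iterate_mul_self {x : E} (hx : IsSelfAdjoint x) (k : ℕ) :
    ‖(fun y : E => y * y)^[k] x‖ = ‖x‖ ^ 2 ^ k := by
  induction k generalizing x with
  | zero => simp
  | succ k ih =>
    have hxx : IsSelfAdjoint (x * x) := by
      simpa only [hx.star_eq] using IsSelfAdjoint.star_mul_self x
    rw [Function.iterate_succ_apply, ih hxx, hx.norm_mul_self, ← pow_mul, pow_succ']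

lemma norm_sum_le_sup'_of_pairwise_mul_eq_zero {ι : Type*} (s : Finset ι) (hs : s.Nonempty)
    (q : ι → E) (hsa : ∀ i ∈ s, IsSelfAdjoint (q i))
    (horth : (s : Set ι).Pairwise fun i j => q i * q j = 0) :
    ‖∑ i ∈ s, q i‖ ≤ s.sup' hs fun i => ‖q i‖ := by
  set M := s.sup' hs fun i => ‖q i‖
  have hqM : ∀ i ∈ s, ‖q i‖ ≤ M := fun i hi => Finset.le_sup' (fun i => ‖q i‖) hi
  have hsum_sa : IsSelfAdjoint (∑ i ∈ s, q i) :=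
    Finset.sum_induction q _ (fun _ _ => IsSelfAdjoint.add) (IsSelfAdjoint.zero E) hsa
  refine le_of_forall_pow_le_mul_pow (C := s.card) (norm_nonneg _)
    ((norm_nonneg _).trans (hqM _ hs.choose_spec))
    (tendsto_pow_atTop_atTop_of_one_lt one_lt_two) fun k => ?_
  calc ‖∑ i ∈ s, q i‖ ^ 2 ^ k
      = ‖∑ i ∈ s, (fun y : E => y * y)^[k] (q i)‖ := by
        rw [← hsum_sa.norm_iterate_mul_self,
          iterate_mul_self_sum_of_pairwise_mul_eq_zero s k q horth]
    _ ≤ ∑ i ∈ s, ‖(fun y : E => y * y)^[k] (q i)‖ := norm_sum_le _ _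
    _ = ∑ i ∈ s, ‖q i‖ ^ 2 ^ k :=
        Finset.sum_congr rfl fun i hi => (hsa i hi).norm_iterate_mul_self k
    _ ≤ ∑ _i ∈ s, M ^ 2 ^ k :=
        Finset.sum_le_sum fun i hi => pow_le_pow_left₀ (norm_nonneg _) (hqM i hi) _
    _ = s.card * M ^ 2 ^ k := by rw [Finset.sum_const, nsmul_eq_mul]

end CStarRing

/-- If `a₁, …, aₙ` are elements of a C*-algebra with `aᵢ * aⱼ* = 0` for
`i ≠ j`, then `‖∑ᵢ aᵢ* * aᵢ‖ ≤ maxᵢ ‖aᵢ‖²`. -/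
theorem stmt_1 {A : Type*} [NonUnitalCStarAlgebra A]
    {ι : Type*} (s : Finset ι) (hs : s.Nonempty) (a : ι → A)
    (horth : ∀ i ∈ s, ∀ j ∈ s, i ≠ j → a i * star (a j) = 0) :
    ‖∑ i ∈ s, star (a i) * a i‖ ≤ s.sup' hs (fun i => ‖a i‖ ^ 2) := by
  have hb : (s : Set ι).Pairwise fun i j => star (a i) * a i * (star (a j) * a j) = 0 :=
    fun i hi j hj hij => by
      dsimp only
      rw [mul_assoc, ← mul_assoc (a i) (star (a j)), horth i hi j hj hij, zero_mul, mul_zero]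
  calc ‖∑ i ∈ s, star (a i) * a i‖
      ≤ s.sup' hs (fun i => ‖star (a i) * a i‖) :=
        norm_sum_le_sup'_of_pairwise_mul_eq_zero s hs _
          (fun i _ => IsSelfAdjoint.star_mul_self (a i)) hb
    _ = s.sup' hs (fun i => ‖a i‖ ^ 2) :=
        Finset.sup'_congr hs rfl fun i _ => by rw [CStarRing.norm_star_mul_self, sq]
end

section
/- Let A be a C*-algebra and b ∈ A a self-adjoint element. Then b is positive (i.e. b ≥ 0, equivalently its spectrum lies in [0,∞)) if and only if for every positive element a ∈ A one has ‖a‖ ≤ ‖a + b‖. -/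
/-!
If `b` is not positive, its negative part `b⁻` is nonzero. Writing `b = b⁺ - b⁻` with `b⁺ b⁻ = 0`,
the positive element `a = (s + 1) • b⁻` gives `a + b = s • b⁻ + b⁺`, a sum of orthogonal positive
elements, whose norm is `max (s ‖b⁻‖) ‖b⁺‖`. For `s = ‖b⁺‖ / ‖b⁻‖` this is `‖b⁺‖`, strictly less
than `‖a‖ = ‖b⁺‖ + ‖b⁻‖`.
-/

open CFC

section

variable {A : Type*} [NonUnitalCStarAlgebra A] [PartialOrder A] [StarOrderedRing A]

/-- Orthogonal positive elements are the positive and negative parts of their difference, so their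
sum is the absolute value of that difference. -/
lemma CStarAlgebra.norm_add_eq_max_of_mul_eq_zero {x y : A} (hx : 0 ≤ x) (hy : 0 ≤ y)
    (hxy : x * y = 0) : ‖x + y‖ = max ‖x‖ ‖y‖ := by
  obtain ⟨hpos, hneg⟩ := posPart_negPart_unique (a := x - y) rfl hxy
  have hsa : IsSelfAdjoint (x - y) := hx.isSelfAdjoint.sub hy.isSelfAdjoint
  calc ‖x + y‖ = ‖CFC.abs (x - y)‖ := by rw [← CFC.posPart_add_negPart _ hsa, hpos, hneg]
    _ = ‖x - y‖ := norm_abs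
    _ = max ‖x‖ ‖y‖ := by rw [hsa.norm_eq_max_norm_posPart_negPart, hpos, hneg]

lemma CStarAlgebra.norm_smul_negPart_add_posPart {b : A} {s : ℝ} (hs : 0 ≤ s) :
    ‖s • b⁻ + b⁺‖ = max (s * ‖b⁻‖) ‖b⁺‖ := by
  have horth : s • b⁻ * b⁺ = 0 := by rw [smul_mul_assoc, negPart_mul_posPart, smul_zero]
  rw [CStarAlgebra.norm_add_eq_max_of_mul_eq_zero (smul_nonneg hs (negPart_nonneg b))
    (posPart_nonneg b) horth, norm_smul, Real.norm_of_nonneg hs]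

lemma IsSelfAdjoint.exists_nonneg_norm_add_lt {b : A} (hb : IsSelfAdjoint b) (hb0 : ¬0 ≤ b) :
    ∃ a : A, 0 ≤ a ∧ ‖a + b‖ < ‖a‖ := by
  have hn : 0 < ‖b⁻‖ := norm_pos_iff.mpr fun h ↦ hb0 ((negPart_eq_zero_iff b hb).mp h)
  set s := ‖b⁺‖ / ‖b⁻‖
  have hs : 0 ≤ s := by positivity
  refine ⟨(s + 1) • b⁻, smul_nonneg (by linarith) (negPart_nonneg b), ?_⟩
  have hsum : (s + 1) • b⁻ + b = s • b⁻ + b⁺ := by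
    rw [sub_eq_iff_eq_add.mp (posPart_sub_negPart b hb), add_smul, one_smul]
    abel
  calc ‖(s + 1) • b⁻ + b‖ = max (s * ‖b⁻‖) ‖b⁺‖ := by
        rw [hsum, CStarAlgebra.norm_smul_negPart_add_posPart hs]
    _ = ‖b⁺‖ := by rw [div_mul_cancel₀ _ hn.ne', max_self]
    _ < (s + 1) * ‖b⁻‖ := by rw [add_mul, div_mul_cancel₀ _ hn.ne', one_mul]; linarith
    _ = ‖(s + 1) • b⁻‖ := by rw [norm_smul, Real.norm_of_nonneg (by linarith)]

end

/-- A self-adjoint element `b` of a C*-algebra is positive if and only if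
`‖a‖ ≤ ‖a + b‖` for every positive element `a`. -/
theorem stmt_3 {A : Type*} [NonUnitalCStarAlgebra A] [PartialOrder A] [StarOrderedRing A]
    (b : A) (hb : IsSelfAdjoint b) :
    0 ≤ b ↔ ∀ a : A, 0 ≤ a → ‖a‖ ≤ ‖a + b‖ := by
  refine ⟨fun hb0 a ha ↦ CStarAlgebra.norm_le_norm_of_nonneg_of_le ha (le_add_of_nonneg_right hb0),
    fun h ↦ ?_⟩
  by_contra hb0
  obtain ⟨a, ha, hlt⟩ := hb.exists_nonneg_norm_add_lt hb0
  exact (h a ha).not_gt hlt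
end

section
/- Let A be a C*-algebra and let L, R : A → A be ℂ-linear maps satisfying L(ab) = L(a) b, R(ab) = a R(b), and a L(b) = R(a) b for all a, b ∈ A. Then L and R are automatically bounded linear operators. -/
/-!
The relation `a * L b = R a * b` cuts out the graph of `L` as the intersection over `a` of the
closed sets `{(x, y) | a * y = R a * x}`: in a C*-algebra an element `y` is determined by the
products `a * y` (take `a = star y`). Hence the graph of `L` is closed, and `L` is bounded by the
closed graph theorem; the same argument with the products on the other side applies to `R`.
-/

namespace CStarRing

variable {A : Type*} [NonUnitalNormedRing A] [StarRing A] [CStarRing A]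

theorem eq_of_forall_mul_left_eq {x y : A} (h : ∀ a, a * x = a * y) : x = y := by
  rw [← sub_eq_zero, ← star_mul_self_eq_zero_iff, mul_sub, h, sub_self]

theorem eq_of_forall_mul_right_eq {x y : A} (h : ∀ b, x * b = y * b) : x = y := by
  rw [← sub_eq_zero, ← mul_star_self_eq_zero_iff, sub_mul, h, sub_self]

variable {𝕜 : Type*} [NontriviallyNormedField 𝕜] [NormedSpace 𝕜 A] [CompleteSpace A]

theorem continuous_of_mul_apply_eq {L : A →ₗ[𝕜] A} {R : A → A}
    (hLR : ∀ a b, a * L b = R a * b) : Continuous L := by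
  refine L.continuous_of_isClosed_graph ?_
  have hgraph : (L.graph : Set (A × A)) = ⋂ a, {p | a * p.2 = R a * p.1} := by
    ext p
    simp only [SetLike.mem_coe, LinearMap.mem_graph_iff, Set.mem_iInter, Set.mem_ofPred_eq,
      ← hLR]
    exact ⟨fun hp a => hp ▸ rfl, fun hp => eq_of_forall_mul_left_eq hp⟩
  rw [hgraph]
  exact isClosed_iInter fun a =>
    isClosed_eq (continuous_const.mul continuous_snd) (continuous_const.mul continuous_fst)

theorem continuous_of_apply_mul_eq {L : A → A} {R : A →ₗ[𝕜] A}
    (hLR : ∀ a b, a * L b = R a * b) : Continuous R := by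
  refine R.continuous_of_isClosed_graph ?_
  have hgraph : (R.graph : Set (A × A)) = ⋂ b, {p | p.2 * b = p.1 * L b} := by
    ext p
    simp only [SetLike.mem_coe, LinearMap.mem_graph_iff, Set.mem_iInter, Set.mem_ofPred_eq, hLR]
    exact ⟨fun hp b => hp ▸ rfl, fun hp => eq_of_forall_mul_right_eq hp⟩
  rw [hgraph]
  exact isClosed_iInter fun b =>
    isClosed_eq (continuous_snd.mul continuous_const) (continuous_fst.mul continuous_const)

end CStarRing

theorem stmt_5_general {A : Type*} [NonUnitalCStarAlgebra A]
    (L R : A →ₗ[ℂ] A)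
    (hLR : ∀ a b : A, a * L b = R a * b) :
    (∃ C : ℝ, ∀ a : A, ‖L a‖ ≤ C * ‖a‖) ∧ (∃ C : ℝ, ∀ a : A, ‖R a‖ ≤ C * ‖a‖) :=
  let L' : A →L[ℂ] A := ⟨L, CStarRing.continuous_of_mul_apply_eq hLR⟩
  let R' : A →L[ℂ] A := ⟨R, CStarRing.continuous_of_apply_mul_eq hLR⟩
  ⟨⟨‖L'‖, L'.le_opNorm⟩, ⟨‖R'‖, R'.le_opNorm⟩⟩

/-- An algebraic double centralizer `(L, R)` of a C*-algebra consists
automatically of bounded linear maps. -/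
theorem stmt_5 {A : Type*} [NonUnitalCStarAlgebra A]
    (L R : A →ₗ[ℂ] A)
    (hL : ∀ a b : A, L (a * b) = L a * b)
    (hR : ∀ a b : A, R (a * b) = a * R b)
    (hLR : ∀ a b : A, a * L b = R a * b) :
    (∃ C : ℝ, ∀ a : A, ‖L a‖ ≤ C * ‖a‖) ∧ (∃ C : ℝ, ∀ a : A, ‖R a‖ ≤ C * ‖a‖) :=
  stmt_5_general L R hLR
end
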